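/- arXiv:2211.08725 — 4 statements merged into one kernel-verified Lean document; each statement's English description precedes it below -/
import Mathlib

section
/- Let G be a group, N a normal subgroup of G, and c ≥ 1. Then [N, γ_c(G)] ≤ ⟨T_{c+1}(G) ∩ N⟩ ≤ N ∩ γ_{c+1}(G). -/
/-!
Whether `⁅p, q⁆` lies in a normal subgroup `K` only depends on whether the images of `p` and `q`
commute in `G ⧸ K`, so for fixed `q` it suffices to check `p` on generators. By induction this
gives `γ_c(G) = ⟨T_c(G)⟩`, and for `q ∈ N` and `t ∈ T_c(G)` the commutator `⁅t, q⁆` lies in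
`T_{c+1}(G) ∩ N`, whence `⁅γ_c(G), N⁆ ≤ ⟨T_{c+1}(G) ∩ N⟩`.
-/

open Subgroup
open scoped commutatorElement

/-- `Tset G c` is the set `T_{c+1}(G)` of left-normed commutators of weight `c+1` in `G`:
`Tset G 0 = G` (weight-one "commutators", i.e. all elements), and
`Tset G (n+1) = {⁅a, g⁆ | a ∈ Tset G n, g ∈ G}`. -/
def Tset (G : Type*) [Group G] : ℕ → Set G
  | 0 => Set.univ
  | n + 1 => {x | ∃ a ∈ Tset G n, ∃ g : G, x = ⁅a, g⁆}

theorem Tset_conj {G : Type*} [Group G] (n : ℕ) {x : G} (hx : x ∈ Tset G n) (g : G) :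
    g * x * g⁻¹ ∈ Tset G n := by
  induction n generalizing x with
  | zero => trivial
  | succ n ih =>
      obtain ⟨a, ha, b, rfl⟩ := hx
      exact ⟨g * a * g⁻¹, ih ha, g * b * g⁻¹, conjugate_commutatorElement a b g⟩

/-- `Tcl c S = ⟨T_{c+1}(G) ∩ S⟩`, the subgroup generated by the left-normed commutators of
weight `c+1` lying in `S`. -/
def Tcl {G : Type*} [Group G] (c : ℕ) (S : Subgroup G) : Subgroup G :=
  Subgroup.closure (Tset G c ∩ (S : Set G))

instance Tcl_normal {G : Type*} [Group G] (c : ℕ) (S : Subgroup G) [hS : S.Normal] :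
    (Tcl c S).Normal := by
  constructor
  intro n hn g
  induction hn using Subgroup.closure_induction with
  | mem x hx =>
      exact Subgroup.subset_closure ⟨Tset_conj c hx.1 g, hS.conj_mem x hx.2 g⟩
  | one => simpa using (Tcl c S).one_mem
  | mul x y _ _ hx hy =>
      have h : g * (x * y) * g⁻¹ = (g * x * g⁻¹) * (g * y * g⁻¹) := by group
      rw [h]; exact mul_mem hx hy
  | inv x _ hx =>
      have h : g * x⁻¹ * g⁻¹ = (g * x * g⁻¹)⁻¹ := by group
      rw [h]; exact inv_mem hx

theorem Tset_subset_lcs {G : Type*} [Group G] (n : ℕ) :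
    Tset G n ⊆ ((⊤ : Subgroup G).lowerCentralSeries n : Set G) := by
  induction n with
  | zero => intro x _; simp [Subgroup.lowerCentralSeries]
  | succ n ih =>
      rintro x ⟨a, ha, b, rfl⟩
      rw [Subgroup.lowerCentralSeries_succ]
      exact Subgroup.commutator_mem_commutator (ih ha) (Subgroup.mem_top b)

theorem Tcl_le {G : Type*} [Group G] (c : ℕ) (S : Subgroup G) : Tcl c S ≤ S :=
  (Subgroup.closure_le S).2 Set.inter_subset_right

theorem Tcl_le_lcs {G : Type*} [Group G] (c : ℕ) (S : Subgroup G) :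
    Tcl c S ≤ (⊤ : Subgroup G).lowerCentralSeries c :=
  (Subgroup.closure_le _).2 fun _ hx => Tset_subset_lcs c hx.1

theorem Tcl_mono {G : Type*} [Group G] (c : ℕ) {R K : Subgroup G} (h : R ≤ K) :
    Tcl c R ≤ Tcl c K :=
  Subgroup.closure_mono (Set.inter_subset_inter_right _ h)

theorem subgroupOf_le_comap_inclusion {F : Type*} [Group F] {A B H₁ H₂ : Subgroup F}
    (hH : H₁ ≤ H₂) (hAB : A ≤ B) :
    A.subgroupOf H₁ ≤ (B.subgroupOf H₂).comap (Subgroup.inclusion hH) := by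
  intro x hx
  rw [Subgroup.mem_comap, Subgroup.mem_subgroupOf, Subgroup.coe_inclusion]
  exact hAB (Subgroup.mem_subgroupOf.mp hx)

theorem commutatorElement_mem_iff_commute_mk {G : Type*} [Group G] {K : Subgroup G} [K.Normal]
    {p q : G} : ⁅p, q⁆ ∈ K ↔ Commute (p : G ⧸ K) q := by
  rw [← QuotientGroup.eq_one_iff, ← commutatorElement_eq_one_iff_commute]
  exact Iff.rfl

theorem commutatorElement_mem_of_mem_closure {G : Type*} [Group G] {K : Subgroup G} [K.Normal]
    {S : Set G} {q : G} (hS : ∀ s ∈ S, ⁅s, q⁆ ∈ K) {p : G} (hp : p ∈ closure S) :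
    ⁅p, q⁆ ∈ K := by
  have hle : closure S ≤ (centralizer {(q : G ⧸ K)}).comap (QuotientGroup.mk' K) :=
    (closure_le _).2 fun s hs =>
      mem_centralizer_singleton_iff.2 (commutatorElement_mem_iff_commute_mk.1 (hS s hs))
  exact commutatorElement_mem_iff_commute_mk.2 (mem_centralizer_singleton_iff.1 (hle hp))

theorem commutatorElement_mem_Tcl_succ {G : Type*} [Group G] {n : ℕ} (S : Subgroup G) [S.Normal]
    {p q : G} (hp : p ∈ Tcl n ⊤) (hq : q ∈ S) : ⁅p, q⁆ ∈ Tcl (n + 1) S :=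
  commutatorElement_mem_of_mem_closure (K := Tcl (n + 1) S) (fun s hs => Subgroup.subset_closure
    ⟨⟨s, hs.1, q, rfl⟩, commutator_le_right ⊤ S (commutator_mem_commutator (mem_top s) hq)⟩) hp

theorem lowerCentralSeries_le_Tcl_top {G : Type*} [Group G] (n : ℕ) :
    (⊤ : Subgroup G).lowerCentralSeries n ≤ Tcl n ⊤ := by
  induction n with
  | zero => exact fun x _ => Subgroup.subset_closure ⟨trivial, trivial⟩
  | succ n ih =>
    rw [Subgroup.lowerCentralSeries_succ, commutator_le]
    exact fun p hp q hq => commutatorElement_mem_Tcl_succ ⊤ (ih hp) hq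

/-- for a group `G`, a normal subgroup `N` and `c ≥ 1`,
`[N, γ_c(G)] ≤ ⟨T_{c+1}(G) ∩ N⟩ ≤ N ∩ γ_{c+1}(G)`.
Here `γ_j(G) = lowerCentralSeries G (j-1)`, so `γ_c(G) = lowerCentralSeries G (c-1)` and
`γ_{c+1}(G) = lowerCentralSeries G c`, and `⟨T_{c+1}(G) ∩ N⟩ = Tcl c N`. -/
theorem stmt1 {G : Type*} [Group G] (N : Subgroup G) [N.Normal] (c : ℕ) (hc : 1 ≤ c) :
    ⁅N, (⊤ : Subgroup G).lowerCentralSeries (c - 1)⁆ ≤ Tcl c N ∧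
      Tcl c N ≤ N ⊓ (⊤ : Subgroup G).lowerCentralSeries c := by
  obtain ⟨k, rfl⟩ := Nat.exists_eq_add_of_le' hc
  refine ⟨?_, le_inf (Tcl_le _ N) (Tcl_le_lcs _ N)⟩
  rw [Nat.add_sub_cancel, commutator_comm, commutator_le]
  exact fun p hp n hn => commutatorElement_mem_Tcl_succ N (lowerCentralSeries_le_Tcl_top k hp) hn
end

section
/- Let F be a group, R a normal subgroup of F, and c ≥ 1. Then [R ∩ γ_{c+1}(F), R ∩ γ_{c+1}(F)] ≤ ⟨T_{c+1}(F) ∩ R⟩. Consequently the quotient group (R ∩ γ_{c+1}(F))/⟨T_{c+1}(F) ∩ R⟩ (the c-nilpotent B̃₀-invariant of F/R) is abelian. -/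
open Subgroup
open scoped commutatorElement

/-!
The generating set `T_c(F)` of `γ_c(F)` satisfies `⁅T_c(F), R⁆ ⊆ T_{c+1}(F) ∩ R`, and modulo a normal
subgroup the elements commuting with every element of `R` form a subgroup; hence already
`⁅γ_c(F), R⁆ ≤ ⟨T_{c+1}(F) ∩ R⟩`. The claim follows because `R ∩ γ_{c+1}(F)` lies both in `γ_c(F)`
and in `R`.
-/

theorem commutator_closure_le_of_normal {G : Type*} [Group G] {N : Subgroup G} [hN : N.Normal]
    {S : Set G} {H : Subgroup G} (h : ∀ s ∈ S, ∀ g ∈ H, ⁅s, g⁆ ∈ N) : ⁅closure S, H⁆ ≤ N := by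
  rw [commutator_le]
  intro a ha g hg
  induction ha using closure_induction with
  | mem s hs => exact h s hs g hg
  | one => simp
  | mul x y _ _ hx hy =>
      rw [commutatorElement_mul_left_eq_conj_mul]
      exact mul_mem (hN.conj_mem _ hy x) hx
  | inv x _ hx =>
      rw [commutatorElement_inv_left, ← commutatorElement_inv]
      simpa using hN.conj_mem _ (inv_mem hx) x⁻¹

theorem commutator_lowerCentralSeries_le_Tcl {G : Type*} [Group G] (R : Subgroup G) [R.Normal]
    (n : ℕ) : ⁅(⊤ : Subgroup G).lowerCentralSeries n, R⁆ ≤ Tcl (n + 1) R := by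
  refine (commutator_mono (lowerCentralSeries_le_Tcl_top n) le_rfl).trans
    (commutator_closure_le_of_normal ?_)
  exact fun s hs r hr => subset_closure
    ⟨⟨s, hs.1, r, rfl⟩, commutator_le_right _ R (commutator_mem_commutator (mem_top s) hr)⟩

theorem QuotientGroup.mul_comm_of_commutator_le {G : Type*} [Group G] {H N : Subgroup G}
    [(N.subgroupOf H).Normal] (h : ⁅H, H⁆ ≤ N) (x y : H ⧸ N.subgroupOf H) : x * y = y * x := by
  have : IsMulCommutative (H ⧸ N.subgroupOf H) := by
    rw [Normal.quotient_commutative_iff_commutator_le, subgroupOf, ← map_le_iff_le_comap,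
      map_subtype_commutator]
    exact h
  exact mul_comm' x y

/-- for a group `F`, a normal subgroup `R` and `c ≥ 1`,
`[R ∩ γ_{c+1}(F), R ∩ γ_{c+1}(F)] ≤ ⟨T_{c+1}(F) ∩ R⟩`, and consequently the quotient
`(R ∩ γ_{c+1}(F))/⟨T_{c+1}(F) ∩ R⟩` (the `c`-nilpotent `B̃₀`-invariant of `F/R`) is abelian.
Here `γ_{c+1}(F) = lowerCentralSeries F c` and `⟨T_{c+1}(F) ∩ R⟩ = Tcl c R`. -/
theorem stmt2 {F : Type*} [Group F] (R : Subgroup F) [R.Normal] (c : ℕ) (hc : 1 ≤ c) :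
    ⁅R ⊓ (⊤ : Subgroup F).lowerCentralSeries c, R ⊓ (⊤ : Subgroup F).lowerCentralSeries c⁆ ≤ Tcl c R ∧
      ∀ x y : (↥(R ⊓ (⊤ : Subgroup F).lowerCentralSeries c)) ⧸
          ((Tcl c R).subgroupOf (R ⊓ (⊤ : Subgroup F).lowerCentralSeries c)),
        x * y = y * x := by
  obtain ⟨n, rfl⟩ := Nat.exists_eq_add_of_le' hc
  have key : ⁅R ⊓ (⊤ : Subgroup F).lowerCentralSeries (n + 1),
      R ⊓ (⊤ : Subgroup F).lowerCentralSeries (n + 1)⁆ ≤ Tcl (n + 1) R :=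
    (commutator_mono (inf_le_right.trans (Subgroup.lowerCentralSeries_antitone _ n.le_succ))
      inf_le_left).trans (commutator_lowerCentralSeries_le_Tcl R n)
  exact ⟨key, QuotientGroup.mul_comm_of_commutator_le key⟩
end

section
/- Let F and F̄ be groups, R̄ a normal subgroup of F̄, and β, β' : F → F̄ group homomorphisms such that β(f)⁻¹·β'(f) ∈ R̄ for every f ∈ F. Then for every x in the commutator subgroup F' of F one has β(x)⁻¹·β'(x) ∈ ⟨K(F̄) ∩ R̄⟩; in particular β and β' induce the same homomorphism F' → F̄/⟨K(F̄) ∩ R̄⟩. -/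
open Subgroup
open scoped commutatorElement

/-- `Kcl S = ⟨K(F) ∩ S⟩`: the subgroup of `F` generated by the commutators of `F`
that lie in `S`. -/
def Kcl {F : Type*} [Group F] (S : Subgroup F) : Subgroup F :=
  Subgroup.closure (commutatorSet F ∩ (S : Set F))

instance Kcl_normal {F : Type*} [Group F] (S : Subgroup F) [hS : S.Normal] :
    (Kcl S).Normal := by
  constructor
  intro n hn g
  induction hn using Subgroup.closure_induction with
  | mem x hx =>
      obtain ⟨⟨a, b, hab⟩, hxS⟩ := hx
      apply Subgroup.subset_closure
      refine ⟨⟨g * a * g⁻¹, g * b * g⁻¹, ?_⟩, hS.conj_mem x hxS g⟩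
      rw [← conjugate_commutatorElement, hab]
  | one => simpa using (Kcl S).one_mem
  | mul x y _ _ hx hy =>
      have h : g * (x * y) * g⁻¹ = (g * x * g⁻¹) * (g * y * g⁻¹) := by group
      rw [h]; exact mul_mem hx hy
  | inv x _ hx =>
      have h : g * x⁻¹ * g⁻¹ = (g * x * g⁻¹)⁻¹ := by group
      rw [h]; exact inv_mem hx

theorem Kcl_le {F : Type*} [Group F] (S : Subgroup F) : Kcl S ≤ S :=
  (Subgroup.closure_le S).2 Set.inter_subset_right

theorem Kcl_le_commutator {F : Type*} [Group F] (S : Subgroup F) :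
    Kcl S ≤ commutator F := by
  rw [commutator_eq_closure]
  exact Subgroup.closure_mono Set.inter_subset_left

theorem Kcl_mono {F : Type*} [Group F] {R K : Subgroup F} (h : R ≤ K) : Kcl R ≤ Kcl K :=
  Subgroup.closure_mono (Set.inter_subset_inter_right _ h)

theorem commutator_left_mem_of_mem {Fb : Type*} [Group Fb] (Rb : Subgroup Fb) [hN : Rb.Normal]
    {r : Fb} (hr : r ∈ Rb) (y : Fb) : ⁅r, y⁆ ∈ Rb := by
  have : ⁅r, y⁆ = r * (y * r⁻¹ * y⁻¹) := by group
  rw [this]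
  exact mul_mem hr (by simpa using hN.conj_mem r⁻¹ (inv_mem hr) y)

theorem commutator_right_mem_of_mem {Fb : Type*} [Group Fb] (Rb : Subgroup Fb) [hN : Rb.Normal]
    (x : Fb) {s : Fb} (hs : s ∈ Rb) : ⁅x, s⁆ ∈ Rb := by
  have : ⁅x, s⁆ = (x * s * x⁻¹) * s⁻¹ := by group
  rw [this]
  exact mul_mem (hN.conj_mem s hs x) (inv_mem hs)

theorem Kcl_key {Fb : Type*} [Group Fb] (Rb : Subgroup Fb) [Rb.Normal]
    (u v : Fb) {r s : Fb} (hr : r ∈ Rb) (hs : s ∈ Rb) :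
    ⁅u, v⁆⁻¹ * ⁅u * r, v * s⁆ ∈ Kcl Rb := by
  have hk₁ : ⁅r, v * s⁆ ∈ Kcl Rb :=
    Subgroup.subset_closure ⟨⟨r, v * s, rfl⟩, commutator_left_mem_of_mem Rb hr _⟩
  have hk₂ : ⁅u, s⁆ ∈ Kcl Rb :=
    Subgroup.subset_closure ⟨⟨u, s, rfl⟩, commutator_right_mem_of_mem Rb _ hs⟩
  have hk₁' : u * ⁅r, v * s⁆ * u⁻¹ ∈ Kcl Rb := (Kcl_normal Rb).conj_mem _ hk₁ u
  have hk₂' : v * ⁅u, s⁆ * v⁻¹ ∈ Kcl Rb := (Kcl_normal Rb).conj_mem _ hk₂ v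
  have hk₁'' : ⁅u, v⁆⁻¹ * (u * ⁅r, v * s⁆ * u⁻¹) * ⁅u, v⁆ ∈ Kcl Rb := by
    simpa using (Kcl_normal Rb).conj_mem _ hk₁' ⁅u, v⁆⁻¹
  have hid : ⁅u, v⁆⁻¹ * ⁅u * r, v * s⁆ =
      (⁅u, v⁆⁻¹ * (u * ⁅r, v * s⁆ * u⁻¹) * ⁅u, v⁆) * (v * ⁅u, s⁆ * v⁻¹) := by
    group
  rw [hid]
  exact mul_mem hk₁'' hk₂'

/-- if `β, β' : F → F̄` satisfy `(β f)⁻¹ * β' f ∈ R̄` for all `f`, then for every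
`x` in the commutator subgroup of `F` one has `(β x)⁻¹ * β' x ∈ ⟨K(F̄) ∩ R̄⟩`; in particular
`β` and `β'` induce the same homomorphism `F' → F̄/⟨K(F̄) ∩ R̄⟩`. -/
theorem stmt4 {F Fb : Type*} [Group F] [Group Fb] (Rb : Subgroup Fb) [Rb.Normal]
    (β β' : F →* Fb) (h : ∀ f : F, (β f)⁻¹ * β' f ∈ Rb) :
    (∀ x ∈ commutator F, (β x)⁻¹ * β' x ∈ Kcl Rb) ∧
      ∀ x ∈ commutator F,
        (QuotientGroup.mk (β x) : Fb ⧸ Kcl Rb) = QuotientGroup.mk (β' x) := by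
  have main : ∀ x ∈ commutator F, (β x)⁻¹ * β' x ∈ Kcl Rb := by
    intro x hx
    rw [commutator_eq_closure] at hx
    induction hx using Subgroup.closure_induction with
    | mem x hx =>
        obtain ⟨a, b, rfl⟩ := hx
        have hβ' : β' ⁅a, b⁆ = ⁅β a * ((β a)⁻¹ * β' a), β b * ((β b)⁻¹ * β' b)⁆ := by
          rw [map_commutatorElement]
          congr 1 <;> group
        rw [map_commutatorElement, hβ']
        exact Kcl_key Rb (β a) (β b) (h a) (h b)
    | one => simpa using (Kcl Rb).one_mem
    | mul x y _ _ hx hy =>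
        have hid : (β (x * y))⁻¹ * β' (x * y) =
            ((β y)⁻¹ * ((β x)⁻¹ * β' x) * β y) * ((β y)⁻¹ * β' y) := by
          simp only [map_mul]; group
        rw [hid]
        exact mul_mem (by simpa using (Kcl_normal Rb).conj_mem _ hx (β y)⁻¹) hy
    | inv x _ hx =>
        have hid : (β x⁻¹)⁻¹ * β' x⁻¹ = β x * ((β x)⁻¹ * β' x)⁻¹ * (β x)⁻¹ := by
          simp only [map_inv]; group
        rw [hid]
        exact (Kcl_normal Rb).conj_mem _ (inv_mem hx) (β x)
  refine ⟨main, fun x hx => ?_⟩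
  exact (QuotientGroup.eq).2 (main x hx)
end

section
/- Let π : G → Q be a surjective group homomorphism whose kernel is contained in the center of G (a central extension). Then π is commutativity preserving (i.e. for all q₁, q₂ ∈ Q with ⁅q₁,q₂⁆ = 1 there exist g₁, g₂ ∈ G with π(g₁) = q₁, π(g₂) = q₂ and ⁅g₁,g₂⁆ = 1) if and only if ker π ∩ K(G) = {1}, i.e. the only commutator ⁅x,y⁆ of elements of G lying in ker π is the identity. -/
/-!
In a central extension `π : G → Q`, the commutator `⁅x, y⁆` depends only on `π x` and `π y`,
because multiplying `x` or `y` by a central factor does not change it. Hence some pair of lifts of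
commuting `q₁, q₂` commutes iff every pair does, i.e. iff every commutator in `ker π` is trivial.
-/

open scoped commutatorElement

section Commutator

variable {G : Type*} [Group G]

theorem commutatorElement_mul_left_of_commute {z b : G} (h : Commute z b) (a : G) :
    ⁅a * z, b⁆ = ⁅a, b⁆ := by
  rw [commutatorElement_mul_left_eq_conj_mul, commutatorElement_eq_one_iff_commute.mpr h]
  group

theorem commutatorElement_mul_right_of_commute {a z : G} (h : Commute a z) (b : G) :
    ⁅a, b * z⁆ = ⁅a, b⁆ := by
  rw [commutatorElement_mul_right_eq_mul_conj, commutatorElement_eq_one_iff_commute.mpr h]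
  group

end Commutator

theorem MonoidHom.commutatorElement_eq_of_ker_le_center {G Q : Type*} [Group G] [Group Q]
    {π : G →* Q} (hcentral : π.ker ≤ Subgroup.center G) {x x' y y' : G}
    (hx : π x = π x') (hy : π y = π y') : ⁅x, y⁆ = ⁅x', y'⁆ := by
  have central_of_eq {g g' : G} (h : π g = π g') : g⁻¹ * g' ∈ Subgroup.center G :=
    hcentral (by simp [MonoidHom.mem_ker, h])
  calc ⁅x, y⁆ = ⁅x * (x⁻¹ * x'), y⁆ :=
        (commutatorElement_mul_left_of_commute
          (Subgroup.mem_center_iff.mp (central_of_eq hx) y).symm x).symm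
    _ = ⁅x', y * (y⁻¹ * y')⁆ := by
        rw [mul_inv_cancel_left,
          commutatorElement_mul_right_of_commute
            (Subgroup.mem_center_iff.mp (central_of_eq hy) x') y]
    _ = ⁅x', y'⁆ := by rw [mul_inv_cancel_left]

/-- a central extension `π : G ↠ Q` (i.e. `ker π ≤ Z(G)`) is commutativity
preserving if and only if the only commutator of elements of `G` lying in `ker π` is the
identity, i.e. `ker π ∩ K(G) = 1`. -/
theorem stmt13 {G Q : Type*} [Group G] [Group Q] (π : G →* Q)
    (hπ : Function.Surjective π) (hcentral : π.ker ≤ Subgroup.center G) :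
    (∀ q₁ q₂ : Q, ⁅q₁, q₂⁆ = 1 →
        ∃ g₁ g₂ : G, π g₁ = q₁ ∧ π g₂ = q₂ ∧ ⁅g₁, g₂⁆ = 1) ↔
      ∀ x y : G, ⁅x, y⁆ ∈ π.ker → ⁅x, y⁆ = 1 := by
  constructor
  · intro hcp x y hxy
    obtain ⟨g₁, g₂, hg₁, hg₂, hg⟩ :=
      hcp (π x) (π y) (by rwa [← map_commutatorElement, ← MonoidHom.mem_ker])
    rw [MonoidHom.commutatorElement_eq_of_ker_le_center hcentral hg₁.symm hg₂.symm, hg]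
  · intro h q₁ q₂ hq
    obtain ⟨g₁, rfl⟩ := hπ q₁
    obtain ⟨g₂, rfl⟩ := hπ q₂
    exact ⟨g₁, g₂, rfl, rfl, h g₁ g₂ (by rwa [MonoidHom.mem_ker, map_commutatorElement])⟩
end
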